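/- Two qubit effects A and B (parametrized as below) are coexistent if and only if there exist γ ∈ ℝ and g ∈ ℝ³ satisfying the four inequalities ‖g‖ ≤ γ, ‖a − g‖ ≤ α − γ, ‖b − g‖ ≤ β − γ, and ‖a + b − g‖ ≤ 2 + γ − α − β. -/

import Mathlib

open scoped ComplexOrder RealInnerProductSpace

/-- The vector of Pauli matrices contracted with a real 3-vector: `v · σ`. -/
noncomputable def pauli (v : EuclideanSpace ℝ (Fin 3)) : Matrix (Fin 2) (Fin 2) ℂ :=
  (v 0 : ℂ) • !![0, 1; 1, 0] + (v 1 : ℂ) • !![0, -Complex.I; Complex.I, 0] +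
    (v 2 : ℂ) • !![1, 0; 0, -1]

/-- The qubit effect `(1/2)(α·1 + v·σ)`. -/
noncomputable def qubitEffect (α : ℝ) (v : EuclideanSpace ℝ (Fin 3)) :
    Matrix (Fin 2) (Fin 2) ℂ :=
  (1 / 2 : ℂ) • ((α : ℂ) • (1 : Matrix (Fin 2) (Fin 2) ℂ) + pauli v)

/-- Effects `A` and `B` are coexistent: there is a four-outcome POVM `(G₁,G₂,G₃,G₄)`
with `A = G₁ + G₂` and `B = G₁ + G₃`. -/
def Coexistent (A B : Matrix (Fin 2) (Fin 2) ℂ) : Prop :=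
  ∃ G₁ G₂ G₃ G₄ : Matrix (Fin 2) (Fin 2) ℂ,
    G₁.PosSemidef ∧ G₂.PosSemidef ∧ G₃.PosSemidef ∧ G₄.PosSemidef ∧
    G₁ + G₂ + G₃ + G₄ = 1 ∧ A = G₁ + G₂ ∧ B = G₁ + G₃

/-!
Every Hermitian `2 × 2` matrix is `½(γ·1 + g·σ)` for some `γ ∈ ℝ`, `g ∈ ℝ³`, and such a matrix is
positive semidefinite iff its trace `γ` and determinant `(γ² - ‖g‖²)/4` are nonnegative, i.e. iff
`‖g‖ ≤ γ`. A POVM witnessing coexistence is determined by `G₁ = ½(γ·1 + g·σ)`, the other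
elements being `A - G₁`, `B - G₁` and `1 - A - B + G₁`, which are again of this form by linearity.
-/

theorem Matrix.IsHermitian.posSemidef_iff_trace_nonneg_det_nonneg {𝕜 : Type*} [RCLike 𝕜]
    {A : Matrix (Fin 2) (Fin 2) 𝕜} (hA : A.IsHermitian) :
    A.PosSemidef ↔ 0 ≤ A.trace ∧ 0 ≤ A.det := by
  refine ⟨fun h ↦ ⟨h.trace_nonneg, h.det_nonneg⟩, fun ⟨htr, hdet⟩ ↦ ?_⟩
  rw [hA.trace_eq_sum_eigenvalues, Fin.sum_univ_two, ← RCLike.ofReal_add,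
    RCLike.ofReal_nonneg] at htr
  rw [hA.det_eq_prod_eigenvalues, Fin.prod_univ_two, ← RCLike.ofReal_mul,
    RCLike.ofReal_nonneg] at hdet
  rw [hA.posSemidef_iff_eigenvalues_nonneg]
  simp only [Pi.le_def, Pi.zero_apply, Fin.forall_fin_two]
  constructor <;> nlinarith

lemma pauli_add (v w : EuclideanSpace ℝ (Fin 3)) : pauli (v + w) = pauli v + pauli w := by
  simp only [pauli, PiLp.add_apply, Complex.ofReal_add, add_smul]
  abel

lemma qubitEffect_add (α β : ℝ) (v w : EuclideanSpace ℝ (Fin 3)) :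
    qubitEffect α v + qubitEffect β w = qubitEffect (α + β) (v + w) := by
  simp only [qubitEffect, pauli_add, Complex.ofReal_add, add_smul, smul_add]
  abel

lemma qubitEffect_sub (α β : ℝ) (v w : EuclideanSpace ℝ (Fin 3)) :
    qubitEffect α v - qubitEffect β w = qubitEffect (α - β) (v - w) := by
  rw [sub_eq_iff_eq_add, qubitEffect_add, sub_add_cancel, sub_add_cancel]

lemma qubitEffect_two_zero : qubitEffect 2 0 = 1 := by
  have hpauli : pauli 0 = 0 := by simp [pauli]
  simp [qubitEffect, hpauli, smul_smul]

lemma qubitEffect_eq_of (γ : ℝ) (g : EuclideanSpace ℝ (Fin 3)) :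
    qubitEffect γ g = !![(((γ + g 2) / 2 : ℝ) : ℂ), (g 0 - g 1 * Complex.I) / 2;
      (g 0 + g 1 * Complex.I) / 2, (((γ - g 2) / 2 : ℝ) : ℂ)] := by
  ext i j
  fin_cases i <;> fin_cases j <;> simp [qubitEffect, pauli] <;> ring

lemma isHermitian_qubitEffect (γ : ℝ) (g : EuclideanSpace ℝ (Fin 3)) :
    (qubitEffect γ g).IsHermitian := by
  rw [qubitEffect_eq_of]
  ext i j
  fin_cases i <;> fin_cases j <;> simp [Complex.ext_iff]

lemma trace_qubitEffect (γ : ℝ) (g : EuclideanSpace ℝ (Fin 3)) :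
    (qubitEffect γ g).trace = γ := by
  rw [qubitEffect_eq_of, Matrix.trace_fin_two_of]
  push_cast
  ring

lemma det_qubitEffect (γ : ℝ) (g : EuclideanSpace ℝ (Fin 3)) :
    (qubitEffect γ g).det = ((γ ^ 2 - ‖g‖ ^ 2) / 4 : ℝ) := by
  rw [EuclideanSpace.norm_sq_eq, Fin.sum_univ_three, qubitEffect_eq_of, Matrix.det_fin_two_of]
  simp only [Real.norm_eq_abs, sq_abs]
  push_cast
  ring_nf
  rw [Complex.I_sq]
  ring

lemma posSemidef_qubitEffect_iff (γ : ℝ) (g : EuclideanSpace ℝ (Fin 3)) :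
    (qubitEffect γ g).PosSemidef ↔ ‖g‖ ≤ γ := by
  rw [(isHermitian_qubitEffect γ g).posSemidef_iff_trace_nonneg_det_nonneg, trace_qubitEffect,
    det_qubitEffect, Complex.zero_le_real, Complex.zero_le_real]
  constructor
  · rintro ⟨hγ, hdet⟩
    exact abs_le_of_sq_le_sq' (by linarith) hγ |>.2
  · intro h
    have := norm_nonneg g
    constructor <;> nlinarith

lemma Matrix.IsHermitian.exists_qubitEffect_eq {M : Matrix (Fin 2) (Fin 2) ℂ}
    (hM : M.IsHermitian) :
    ∃ γ g, M = qubitEffect γ g := by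
  refine ⟨(M 0 0).re + (M 1 1).re,
    WithLp.toLp 2 ![2 * (M 0 1).re, -2 * (M 0 1).im, (M 0 0).re - (M 1 1).re], ?_⟩
  have h00 : (M 0 0).im = 0 := Complex.conj_eq_iff_im.1 (hM.apply 0 0)
  have h11 : (M 1 1).im = 0 := Complex.conj_eq_iff_im.1 (hM.apply 1 1)
  have h10 : M 1 0 = star (M 0 1) := (hM.apply 1 0).symm
  rw [qubitEffect_eq_of]
  ext i j
  fin_cases i <;> fin_cases j <;> simp [Complex.ext_iff, h00, h11, h10]
  ring

lemma coexistent_iff_exists_posSemidef (A B : Matrix (Fin 2) (Fin 2) ℂ) :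
    Coexistent A B ↔ ∃ G : Matrix (Fin 2) (Fin 2) ℂ, G.PosSemidef ∧ (A - G).PosSemidef ∧
      (B - G).PosSemidef ∧ (1 - A - B + G).PosSemidef := by
  constructor
  · rintro ⟨G₁, G₂, G₃, G₄, h₁, h₂, h₃, h₄, hsum, rfl, rfl⟩
    refine ⟨G₁, h₁, ?_, ?_, ?_⟩
    · rwa [add_sub_cancel_left]
    · rwa [add_sub_cancel_left]
    · rwa [← hsum, show G₁ + G₂ + G₃ + G₄ - (G₁ + G₂) - (G₁ + G₃) + G₁ = G₄ by abel]
  · rintro ⟨G, hG, hA, hB, hC⟩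
    exact ⟨G, A - G, B - G, 1 - A - B + G, hG, hA, hB, hC, by abel, by abel, by abel⟩

theorem coexistent_iff_four_balls_general (α β : ℝ) (a b : EuclideanSpace ℝ (Fin 3)) :
    Coexistent (qubitEffect α a) (qubitEffect β b) ↔
      ∃ (γ : ℝ) (g : EuclideanSpace ℝ (Fin 3)),
        ‖g‖ ≤ γ ∧ ‖a - g‖ ≤ α - γ ∧ ‖b - g‖ ≤ β - γ ∧
        ‖a + b - g‖ ≤ 2 + γ - α - β := by
  have hG₄ (γ : ℝ) (g : EuclideanSpace ℝ (Fin 3)) :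
      1 - qubitEffect α a - qubitEffect β b + qubitEffect γ g =
        qubitEffect (2 + γ - α - β) (g - (a + b)) := by
    rw [← qubitEffect_two_zero, qubitEffect_sub, qubitEffect_sub, qubitEffect_add]
    congr 1 <;> abel
  rw [coexistent_iff_exists_posSemidef]
  constructor
  · rintro ⟨G, hG, hA, hB, hC⟩
    obtain ⟨γ, g, rfl⟩ := hG.isHermitian.exists_qubitEffect_eq
    rw [qubitEffect_sub] at hA hB
    rw [hG₄] at hC
    simp only [posSemidef_qubitEffect_iff, norm_sub_rev g] at hG hA hB hC
    exact ⟨γ, g, hG, hA, hB, hC⟩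
  · rintro ⟨γ, g, hG, hA, hB, hC⟩
    refine ⟨qubitEffect γ g, ?_⟩
    simp only [qubitEffect_sub, hG₄, posSemidef_qubitEffect_iff, norm_sub_rev g]
    exact ⟨hG, hA, hB, hC⟩

theorem coexistent_iff_four_balls (α β : ℝ) (a b : EuclideanSpace ℝ (Fin 3))
    (hαa : ‖a‖ ≤ α) (hα : α ≤ 2 - ‖a‖) (hβb : ‖b‖ ≤ β) (hβ : β ≤ 2 - ‖b‖) :
    Coexistent (qubitEffect α a) (qubitEffect β b) ↔
      ∃ (γ : ℝ) (g : EuclideanSpace ℝ (Fin 3)),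
        ‖g‖ ≤ γ ∧ ‖a - g‖ ≤ α - γ ∧ ‖b - g‖ ≤ β - γ ∧
        ‖a + b - g‖ ≤ 2 + γ - α - β :=
  coexistent_iff_four_balls_general α β a b
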